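/- For every finite set S of n points in the plane and every natural number F with F < ⌈n/3⌉, there exists a point K such that: for every subset N ⊆ S with |S \ N| ≤ F, every point c and real ρ with dist(p, c) ≤ ρ for all p ∈ N, and every p ∈ N, one has dist(p, K) ≤ 2ρ. (Hence sending all robots straight to K gathers every possible reliable subset N within at most twice its optimal gathering time R(N), i.e., the move-to-centerpoint algorithm has competitive ratio at most 2 when fewer than ⌈n/3⌉ robots are byzantine.) -/
import Mathlib


open scoped Classical

/-- Move-to-centerpoint: for any finite set `S` of points in the plane and any
`F < ⌈n/3⌉`, there is a point `K` such that for every subset `N ⊆ S` omitting at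
most `F` points, and every ball of radius `ρ` containing `N`, every point of `N`
is within distance `2ρ` of `K` (competitive ratio at most `2`). -/
theorem move_to_centerpoint_competitive_two
    (S : Finset (EuclideanSpace ℝ (Fin 2))) (F : ℕ)
    (hF : F < ⌈(S.card : ℚ) / 3⌉₊) :
    ∃ K : EuclideanSpace ℝ (Fin 2),
      ∀ N : Finset (EuclideanSpace ℝ (Fin 2)), N ⊆ S → (S \ N).card ≤ F →
        ∀ (c : EuclideanSpace ℝ (Fin 2)) (ρ : ℝ),
          (∀ p ∈ N, dist p c ≤ ρ) → ∀ p ∈ N, dist p K ≤ 2 * ρ := by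

  set n := S.card with hn
  -- arithmetic: 3 * F + 1 ≤ n
  have harith : 3 * F + 1 ≤ n := by
    have h1 : (⌈(n : ℚ) / 3⌉₊ : ℚ) < (n : ℚ) / 3 + 1 :=
      Nat.ceil_lt_add_one (by positivity)
    have h2 : (F : ℚ) + 1 ≤ (⌈(n : ℚ) / 3⌉₊ : ℚ) := by exact_mod_cast hF
    have h3 : 3 * (F : ℚ) < (n : ℚ) := by linarith
    have h4 : 3 * F < n := by exact_mod_cast h3
    omega
  -- the finite family of valid subsets
  set s : Finset (Finset (EuclideanSpace ℝ (Fin 2))) := S.powerset.filter (fun N => (S \ N).card ≤ F) with hs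
  -- every ≤ 3 of them contain a common point of S
  have hkey : ∀ I : Finset (Finset (EuclideanSpace ℝ (Fin 2))), I ⊆ s → I.card ≤ 3 →
      ∃ q, ∀ N ∈ I, q ∈ N := by
    intro I hIs hI3
    have hbad : (I.biUnion (fun N => S \ N)).card < n := by
      calc (I.biUnion (fun N => S \ N)).card
          ≤ ∑ N ∈ I, (S \ N).card := Finset.card_biUnion_le
        _ ≤ ∑ _N ∈ I, F := by
            refine Finset.sum_le_sum ?_
            intro N hN
            have := hIs hN
            simp only [hs, Finset.mem_filter] at this
            exact this.2
        _ = I.card * F := by simp [Finset.sum_const, mul_comm]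
        _ ≤ 3 * F := Nat.mul_le_mul_right F hI3
        _ < n := by omega
    have hsub : I.biUnion (fun N => S \ N) ⊆ S := by
      intro q hq
      simp only [Finset.mem_biUnion, Finset.mem_sdiff] at hq
      obtain ⟨N, _, hqS, _⟩ := hq
      exact hqS
    have : ∃ q ∈ S, q ∉ I.biUnion (fun N => S \ N) := by
      by_contra h
      push_neg at h
      have : S ⊆ I.biUnion (fun N => S \ N) := h
      have := Finset.card_le_card this
      omega
    obtain ⟨q, hqS, hq⟩ := this
    refine ⟨q, fun N hN => ?_⟩
    by_contra hqN
    exact hq (Finset.mem_biUnion.2 ⟨N, hN, Finset.mem_sdiff.2 ⟨hqS, hqN⟩⟩)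
  -- Helly's theorem: all convex hulls of valid subsets intersect
  have hhelly : (⋂ N ∈ s, convexHull ℝ (N : Set (EuclideanSpace ℝ (Fin 2)))).Nonempty := by
    apply Convex.helly_theorem' (𝕜 := ℝ)
    · intro N _; exact convex_convexHull ℝ _
    · intro I hIs hI3
      have hdim : Module.finrank ℝ (EuclideanSpace ℝ (Fin 2)) = 2 := finrank_euclideanSpace_fin
      rw [hdim] at hI3
      obtain ⟨q, hq⟩ := hkey I hIs hI3
      exact ⟨q, Set.mem_iInter₂.2 fun N hN =>
        subset_convexHull ℝ (N : Set (EuclideanSpace ℝ (Fin 2))) (hq N hN)⟩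
  obtain ⟨K, hK⟩ := hhelly
  refine ⟨K, fun N hNS hNF c ρ hball p hp => ?_⟩
  have hNs : N ∈ s := by
    simp only [hs, Finset.mem_filter, Finset.mem_powerset]
    exact ⟨hNS, hNF⟩
  have hKN : K ∈ convexHull ℝ (N : Set (EuclideanSpace ℝ (Fin 2))) := Set.mem_iInter₂.1 hK N hNs
  have hhull : convexHull ℝ (N : Set (EuclideanSpace ℝ (Fin 2))) ⊆ Metric.closedBall c ρ :=
    convexHull_min (fun x hx => Metric.mem_closedBall.2 (hball x hx))
      (convex_closedBall c ρ)
  have hKc : dist K c ≤ ρ := Metric.mem_closedBall.1 (hhull hKN)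
  calc dist p K ≤ dist p c + dist c K := dist_triangle p c K
    _ ≤ ρ + ρ := add_le_add (hball p hp) (by rwa [dist_comm])
    _ = 2 * ρ := by ring
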